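/- Let R > 0, K ∈ ℝ, C ∈ ℝ and a ∈ (0,R). Define U on the closed disk r ≤ R by U(x,y) = (KR/(2a²))·(r² − a²) + KR·ln(a/R) + C for 0 ≤ r ≤ a, and U(x,y) = KR·ln(r/R) + C for a ≤ r ≤ R. Then U is continuously differentiable on the open disk r < R, satisfies the wave equation ∂²U/∂x² − ∂²U/∂y² = 0 in the open disk r < a, satisfies the Laplace equation ∂²U/∂x² + ∂²U/∂y² = 0 in the open annulus a < r < R, and its outward radial derivative ∂U/∂r equals K on the boundary circle r = R. In particular U solves the Neumann problem for equation (2) with constant boundary flux K. -/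

import Mathlib

/-!
Writing `U (x, y) = φ (x² + y²)`, the profile `φ` of `s = r²` is `C¹` with
`φ' s = KR / (2 max s a²)`: the two pieces agree to first order at `s = a²`. For such a
radial function `U_xx = 2φ' + 4x²φ''` and `U_yy = 2φ' + 4y²φ''`. Inside the disk `r < a`
the profile is affine, so `U_xx = U_yy`; in the annulus it is `(KR/2) log s + const`, so
`U_xx + U_yy = 4φ' + 4sφ'' = 0`; and on `r = R` the radial derivative is `2Rφ'(R²) = K`.
-/

/-- Second partial derivative of `U` in the first (x) variable. -/
noncomputable def pxx (U : ℝ × ℝ → ℝ) (p : ℝ × ℝ) : ℝ :=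
  deriv (deriv (fun x => U (x, p.2))) p.1

/-- Second partial derivative of `U` in the second (y) variable. -/
noncomputable def pyy (U : ℝ × ℝ → ℝ) (p : ℝ × ℝ) : ℝ :=
  deriv (deriv (fun y => U (p.1, y))) p.2

theorem hasDerivAt_ite_le {f g f' g' : ℝ → ℝ} {c : ℝ}
    (hf : ∀ s ≤ c, HasDerivAt f (f' s) s) (hg : ∀ s, c ≤ s → HasDerivAt g (g' s) s)
    (hfg : f c = g c) (hfg' : f' c = g' c) (s : ℝ) :
    HasDerivAt (fun t => if t ≤ c then f t else g t) (if s ≤ c then f' s else g' s) s := by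
  rcases lt_trichotomy s c with hs | rfl | hs
  · rw [if_pos hs.le]
    refine (hf s hs.le).congr_of_eventuallyEq ?_
    filter_upwards [Iio_mem_nhds hs] with t ht
    rw [if_pos (le_of_lt ht)]
  · rw [if_pos le_rfl]
    have hleft : HasDerivWithinAt (fun t => if t ≤ s then f t else g t) (f' s) (Set.Iic s) s :=
      (hf s le_rfl).hasDerivWithinAt.congr (fun t ht => if_pos ht) (if_pos le_rfl)
    have hright :
        HasDerivWithinAt (fun t => if t ≤ s then f t else g t) (f' s) (Set.Ici s) s := by
      refine (hfg' ▸ (hg s le_rfl).hasDerivWithinAt).congr (fun t ht => ?_) (by simp [hfg])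
      split_ifs with h
      · rw [le_antisymm h ht, hfg]
      · rfl
    simpa using hleft.union hright
  · rw [if_neg hs.not_ge]
    refine (hg s hs.le).congr_of_eventuallyEq ?_
    filter_upwards [Ioi_mem_nhds hs] with t ht
    rw [if_neg (not_le.mpr ht)]

theorem hasDerivAt_mul_log_sqrt_div {k C R s : ℝ} (hR : R ≠ 0) (hs : 0 < s) :
    HasDerivAt (fun t => k * Real.log (Real.sqrt t / R) + C) (k / (2 * s)) s := by
  have hsqrt : Real.sqrt s ≠ 0 := (Real.sqrt_pos.mpr hs).ne'
  refine ((((Real.hasDerivAt_sqrt hs.ne').div_const R).log (div_ne_zero hsqrt hR)).const_mul k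
    |>.add_const C).congr_deriv ?_
  rw [div_div_div_cancel_right₀ hR, div_div, mul_assoc, Real.mul_self_sqrt hs.le]
  ring

theorem deriv_deriv_comp_sq_add {φ φ' : ℝ → ℝ} {φ'' b x : ℝ}
    (hφ : ∀ s, HasDerivAt φ (φ' s) s) (hφ' : HasDerivAt φ' φ'' (x ^ 2 + b)) :
    deriv (deriv fun t => φ (t ^ 2 + b)) x = 2 * φ' (x ^ 2 + b) + 4 * x ^ 2 * φ'' := by
  have hsq : ∀ t : ℝ, HasDerivAt (fun t => t ^ 2 + b) (2 * t) t := fun t => by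
    simpa using (hasDerivAt_pow 2 t).add_const b
  have hfirst : deriv (fun t => φ (t ^ 2 + b)) = fun t => φ' (t ^ 2 + b) * (2 * t) :=
    funext fun t => ((hφ _).comp t (hsq t)).deriv
  have hsecond : HasDerivAt (fun t => φ' (t ^ 2 + b) * (2 * t))
      (φ'' * (2 * x) * (2 * x) + φ' (x ^ 2 + b) * 2) x := by
    simpa using (hφ'.comp x (hsq x)).fun_mul ((hasDerivAt_id x).const_mul 2)
  rw [hfirst, hsecond.deriv]
  ring

theorem hasDerivAt_div_max_of_lt {c m s : ℝ} (h : s < m) :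
    HasDerivAt (fun t => c / (2 * max t m)) 0 s := by
  refine (hasDerivAt_const s (c / (2 * m))).congr_of_eventuallyEq ?_
  filter_upwards [Iio_mem_nhds h] with t ht
  rw [max_eq_right ht.le]

theorem hasDerivAt_div_max_of_gt {c m s : ℝ} (hm : 0 ≤ m) (h : m < s) :
    HasDerivAt (fun t => c / (2 * max t m)) (-c / (2 * s ^ 2)) s := by
  have hs : s ≠ 0 := (hm.trans_lt h).ne'
  have hdiv : HasDerivAt (fun t => c / (2 * t)) (-c / (2 * s ^ 2)) s := by
    refine ((hasDerivAt_const s c).div ((hasDerivAt_id' s).const_mul 2) (by simpa)).congr_deriv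
      ?_
    field_simp
    ring
  refine hdiv.congr_of_eventuallyEq ?_
  filter_upwards [Ioi_mem_nhds h] with t ht
  rw [max_eq_left ht.le]

theorem pxx_comp_sq_add_sq {φ φ' : ℝ → ℝ} {φ'' : ℝ} {p : ℝ × ℝ}
    (hφ : ∀ s, HasDerivAt φ (φ' s) s) (hφ' : HasDerivAt φ' φ'' (p.1 ^ 2 + p.2 ^ 2)) :
    pxx (fun q => φ (q.1 ^ 2 + q.2 ^ 2)) p = 2 * φ' (p.1 ^ 2 + p.2 ^ 2) + 4 * p.1 ^ 2 * φ'' :=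
  deriv_deriv_comp_sq_add hφ hφ'

theorem pyy_comp_sq_add_sq {φ φ' : ℝ → ℝ} {φ'' : ℝ} {p : ℝ × ℝ}
    (hφ : ∀ s, HasDerivAt φ (φ' s) s) (hφ' : HasDerivAt φ' φ'' (p.1 ^ 2 + p.2 ^ 2)) :
    pyy (fun q => φ (q.1 ^ 2 + q.2 ^ 2)) p = 2 * φ' (p.1 ^ 2 + p.2 ^ 2) + 4 * p.2 ^ 2 * φ'' := by
  simp only [pyy, add_comm (p.1 ^ 2)]
  exact deriv_deriv_comp_sq_add hφ (add_comm (p.1 ^ 2) _ ▸ hφ')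

noncomputable def neumannProfile (R K C a s : ℝ) : ℝ :=
  if s ≤ a ^ 2 then K * R / (2 * a ^ 2) * (s - a ^ 2) + K * R * Real.log (a / R) + C
  else K * R * Real.log (Real.sqrt s / R) + C

section neumannProfile

variable {R K C a : ℝ}

theorem hasDerivAt_neumannProfile (ha : 0 < a) (hR : R ≠ 0) (s : ℝ) :
    HasDerivAt (neumannProfile R K C a) (K * R / (2 * max s (a ^ 2))) s := by
  have ha2 : 0 < a ^ 2 := by positivity
  have hlin : ∀ s : ℝ, HasDerivAt
      (fun s => K * R / (2 * a ^ 2) * (s - a ^ 2) + K * R * Real.log (a / R) + C)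
      (K * R / (2 * a ^ 2)) s := fun s => by
    simpa using ((((hasDerivAt_id s).sub_const (a ^ 2)).const_mul (K * R / (2 * a ^ 2))).add_const
      (K * R * Real.log (a / R))).add_const C
  have hglue := hasDerivAt_ite_le (c := a ^ 2) (f' := fun _ => K * R / (2 * a ^ 2))
    (g' := fun s => K * R / (2 * s)) (fun s _ => hlin s)
    (fun s hs => hasDerivAt_mul_log_sqrt_div (C := C) hR (ha2.trans_le hs))
    (by simp [Real.sqrt_sq ha.le]) rfl s
  split_ifs at hglue with h
  · rwa [max_eq_right h]
  · rwa [max_eq_left (not_le.1 h).le]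

theorem contDiff_neumannProfile (ha : 0 < a) (hR : R ≠ 0) :
    ContDiff ℝ 1 (neumannProfile R K C a) := by
  have ha2 : 0 < a ^ 2 := by positivity
  refine contDiff_one_iff_deriv.mpr
    ⟨fun s => (hasDerivAt_neumannProfile ha hR s).differentiableAt, ?_⟩
  rw [funext fun s => (hasDerivAt_neumannProfile (K := K) (C := C) ha hR s).deriv]
  exact continuous_const.div (by fun_prop) fun s =>
    (mul_pos two_pos (ha2.trans_le (le_max_right s _))).ne'

theorem deriv_neumannProfile_sq (ha : 0 < a) (haR : a < R) :
    deriv (fun t => neumannProfile R K C a (t ^ 2)) R = K := by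
  have hR : 0 < R := ha.trans haR
  have haR2 : a ^ 2 < R ^ 2 := by gcongr
  have hchain : HasDerivAt (fun t => neumannProfile R K C a (t ^ 2))
      (K * R / (2 * max (R ^ 2) (a ^ 2)) * (2 * R)) R := by
    have hsq : HasDerivAt (fun t : ℝ => t ^ 2) (2 * R) R := by simpa using hasDerivAt_pow 2 R
    exact (hasDerivAt_neumannProfile ha hR.ne' (R ^ 2)).comp R hsq
  rw [hchain.deriv, max_eq_left haR2.le]
  field_simp

end neumannProfile

/-- The piecewise function `U = (KR/(2a²))(r² - a²) + KR ln(a/R) + C` for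
`r ≤ a`, `U = KR ln(r/R) + C` for `a ≤ r ≤ R` solves the Neumann problem for
equation (2) with constant boundary flux `K`: it is C¹ in the open disk
`r < R`, satisfies the wave equation in `r < a`, the Laplace equation in
`a < r < R`, and its outward radial derivative `∂U/∂r` equals `K` on the
boundary circle `r = R` (the radial derivative at a boundary point `p` is the
derivative of `t ↦ U(t·p/R)` at `t = R`). -/
theorem model_neumann_eq2_type_changing
    (R K C a : ℝ) (hR : 0 < R) (ha : a ∈ Set.Ioo 0 R)
    (U : ℝ × ℝ → ℝ)
    (hU : ∀ p : ℝ × ℝ, U p =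
      if p.1 ^ 2 + p.2 ^ 2 ≤ a ^ 2 then
        K * R / (2 * a ^ 2) * (p.1 ^ 2 + p.2 ^ 2 - a ^ 2)
          + K * R * Real.log (a / R) + C
      else
        K * R * Real.log (Real.sqrt (p.1 ^ 2 + p.2 ^ 2) / R) + C) :
    ContDiffOn ℝ 1 U {p : ℝ × ℝ | p.1 ^ 2 + p.2 ^ 2 < R ^ 2} ∧
    (∀ p : ℝ × ℝ, p.1 ^ 2 + p.2 ^ 2 < a ^ 2 → pxx U p - pyy U p = 0) ∧
    (∀ p : ℝ × ℝ, a ^ 2 < p.1 ^ 2 + p.2 ^ 2 → p.1 ^ 2 + p.2 ^ 2 < R ^ 2 →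
      pxx U p + pyy U p = 0) ∧
    (∀ p : ℝ × ℝ, p.1 ^ 2 + p.2 ^ 2 = R ^ 2 →
      deriv (fun t : ℝ => U (t / R * p.1, t / R * p.2)) R = K) := by
  obtain rfl : U = fun p => neumannProfile R K C a (p.1 ^ 2 + p.2 ^ 2) := funext hU
  have hφ := hasDerivAt_neumannProfile (K := K) (C := C) ha.1 hR.ne'
  refine ⟨((contDiff_neumannProfile ha.1 hR.ne').comp (by fun_prop)).contDiffOn,
    fun p hp => ?_, fun p hp _ => ?_, fun p hp => ?_⟩
  · rw [pxx_comp_sq_add_sq hφ (hasDerivAt_div_max_of_lt hp),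
      pyy_comp_sq_add_sq hφ (hasDerivAt_div_max_of_lt hp)]
    ring
  · have ha2 : 0 ≤ a ^ 2 := by positivity
    have hs : p.1 ^ 2 + p.2 ^ 2 ≠ 0 := (ha2.trans_lt hp).ne'
    rw [pxx_comp_sq_add_sq hφ (hasDerivAt_div_max_of_gt ha2 hp),
      pyy_comp_sq_add_sq hφ (hasDerivAt_div_max_of_gt ha2 hp), max_eq_left hp.le]
    field_simp
    ring
  · have hscale (t : ℝ) : (t / R * p.1) ^ 2 + (t / R * p.2) ^ 2 = t ^ 2 := by
      calc (t / R * p.1) ^ 2 + (t / R * p.2) ^ 2 = (t / R) ^ 2 * (p.1 ^ 2 + p.2 ^ 2) := by ring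
        _ = t ^ 2 := by rw [hp]; field_simp
    simp only [hscale]
    exact deriv_neumannProfile_sq ha.1 ha.2
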